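/- arXiv:2401.16510 — 2 statements merged into one kernel-verified Lean document; each statement's English description precedes it below -/
import Mathlib

section
/- Let 0 < a₀ < a₁ < a₂. Then (a₁/a₀)·E(√(1 - a₀/a₁)) - K(√(1 - a₀/a₁)) > 0, where K and E are the complete elliptic integrals of the first and second kind. -/
/-!
In terms of the parameter `m = k² = 1 - a₀/a₁ ∈ (0, 1)` the claim reads
`a₁/a₀ · (E(m) - (1 - m) K(m)) > 0`. Pointwise on `(0, 1)` the integrand of `E(m) - (1 - m) K(m)` is
`m √(1 - s²) / √(1 - m s²) > 0`. Both integrands are dominated by a multiple of `1 / √(1 - s²)`,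
the derivative of `arcsin`, hence integrable, so the integral of the difference is the
difference of the integrals.
-/

open Real Set Filter MeasureTheory

noncomputable def ellipticK (m : ℝ) : ℝ :=
  ∫ s in (0:ℝ)..1, 1 / √((1 - s ^ 2) * (1 - m * s ^ 2))

noncomputable def ellipticE (m : ℝ) : ℝ :=
  ∫ s in (0:ℝ)..1, √(1 - m * s ^ 2) / √(1 - s ^ 2)

lemma intervalIntegrable_one_div_sqrt_one_sub_sq :
    IntervalIntegrable (fun s : ℝ => 1 / √(1 - s ^ 2)) volume 0 1 := by
  apply intervalIntegral.intervalIntegrable_deriv_of_nonneg continuous_arcsin.continuousOn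
  · intro x hx
    rw [min_eq_left zero_le_one, max_eq_right zero_le_one] at hx
    exact hasDerivAt_arcsin (by linarith [hx.1]) hx.2.ne
  · intro x _
    positivity

lemma intervalIntegrable_of_le_mul_one_div_sqrt_one_sub_sq {f : ℝ → ℝ} (hf : Measurable f)
    (C : ℝ) (hle : ∀ s ∈ Icc (0:ℝ) 1, 0 ≤ f s ∧ f s ≤ C * (1 / √(1 - s ^ 2))) :
    IntervalIntegrable f volume 0 1 := by
  refine (intervalIntegrable_one_div_sqrt_one_sub_sq.const_mul C).mono_fun
    hf.aestronglyMeasurable ?_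
  rw [uIoc_of_le zero_le_one]
  filter_upwards [ae_restrict_mem measurableSet_Ioc] with s hs
  obtain ⟨hf0, hfC⟩ := hle s (Ioc_subset_Icc_self hs)
  rw [norm_of_nonneg hf0]
  exact hfC.trans (le_abs_self _)

lemma sqrt_one_sub_mul_sq_div_le {m : ℝ} (hm : 0 ≤ m) (s : ℝ) :
    √(1 - m * s ^ 2) / √(1 - s ^ 2) ≤ 1 / √(1 - s ^ 2) := by
  calc √(1 - m * s ^ 2) / √(1 - s ^ 2) ≤ √1 / √(1 - s ^ 2) := by
        gcongr; nlinarith [sq_nonneg s]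
    _ = 1 / √(1 - s ^ 2) := by rw [sqrt_one]

lemma one_div_sqrt_mul_le {m s : ℝ} (hm0 : 0 ≤ m) (hm1 : m < 1) (hs : s ^ 2 ≤ 1) :
    1 / √((1 - s ^ 2) * (1 - m * s ^ 2)) ≤ 1 / √(1 - m) * (1 / √(1 - s ^ 2)) := by
  rw [sqrt_mul (by linarith), mul_comm (1 / √(1 - m)), one_div_mul_one_div]
  rcases (sqrt_nonneg (1 - s ^ 2)).eq_or_lt with hB | hB
  · simp [← hB]
  · exact one_div_le_one_div_of_le (by have := sqrt_pos.2 (sub_pos.2 hm1); positivity)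
      (mul_le_mul_of_nonneg_left (sqrt_le_sqrt (by nlinarith)) hB.le)

lemma intervalIntegrable_ellipticE_integrand {m : ℝ} (hm : 0 ≤ m) :
    IntervalIntegrable (fun s : ℝ => √(1 - m * s ^ 2) / √(1 - s ^ 2)) volume 0 1 := by
  refine intervalIntegrable_of_le_mul_one_div_sqrt_one_sub_sq (by fun_prop) 1 fun s _ => ?_
  rw [one_mul]
  exact ⟨by positivity, sqrt_one_sub_mul_sq_div_le hm s⟩

lemma intervalIntegrable_ellipticK_integrand {m : ℝ} (hm0 : 0 ≤ m) (hm1 : m < 1) :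
    IntervalIntegrable (fun s : ℝ => 1 / √((1 - s ^ 2) * (1 - m * s ^ 2))) volume 0 1 := by
  refine intervalIntegrable_of_le_mul_one_div_sqrt_one_sub_sq (by fun_prop) (1 / √(1 - m))
    fun s hs => ?_
  exact ⟨by positivity, one_div_sqrt_mul_le hm0 hm1 (by nlinarith [hs.1, hs.2])⟩

lemma mul_ellipticK_integrand_lt {m s : ℝ} (hm0 : 0 < m) (hm1 : m < 1) (hs : s ∈ Ioo (0:ℝ) 1) :
    (1 - m) * (1 / √((1 - s ^ 2) * (1 - m * s ^ 2))) < √(1 - m * s ^ 2) / √(1 - s ^ 2) := by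
  have hB : 0 < 1 - s ^ 2 := by nlinarith [hs.1, hs.2]
  have hA : 1 - m < 1 - m * s ^ 2 := by nlinarith [hs.1, hs.2]
  have hA_sq : √(1 - m * s ^ 2) * √(1 - m * s ^ 2) = 1 - m * s ^ 2 := mul_self_sqrt (by linarith)
  have hsqB : 0 < √(1 - s ^ 2) := sqrt_pos.2 hB
  have hsqA : 0 < √(1 - m * s ^ 2) := sqrt_pos.2 (by linarith)
  rw [sqrt_mul hB.le, mul_one_div, div_lt_div_iff₀ (by positivity) (by positivity)]
  nlinarith [mul_lt_mul_of_pos_right hA hsqB]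

theorem sub_mul_ellipticK_pos {m : ℝ} (hm0 : 0 < m) (hm1 : m < 1) :
    0 < ellipticE m - (1 - m) * ellipticK m := by
  have hE := intervalIntegrable_ellipticE_integrand hm0.le
  have hK := (intervalIntegrable_ellipticK_integrand hm0.le hm1).const_mul (1 - m)
  rw [ellipticE, ellipticK, ← intervalIntegral.integral_const_mul,
    ← intervalIntegral.integral_sub hE hK]
  refine intervalIntegral.intervalIntegral_pos_of_pos_on (hE.sub hK) (fun s hs => ?_) zero_lt_one
  exact sub_pos.2 (mul_ellipticK_integrand_lt hm0 hm1 hs)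

theorem stmt3_general (a₀ a₁ : ℝ) (h0 : 0 < a₀) (h1 : a₀ < a₁) :
    0 < (a₁ / a₀) *
          (∫ s in (0:ℝ)..1,
            Real.sqrt (1 - (Real.sqrt (1 - a₀/a₁))^2 * s^2) / Real.sqrt (1 - s^2))
        - ∫ s in (0:ℝ)..1,
            1 / Real.sqrt ((1 - s^2) * (1 - (Real.sqrt (1 - a₀/a₁))^2 * s^2)) := by
  change 0 < a₁ / a₀ * ellipticE _ - ellipticK _
  have ha₁ : 0 < a₁ := h0.trans h1
  have hc : a₀ / a₁ < 1 := (div_lt_one ha₁).2 h1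
  have key := sub_mul_ellipticK_pos (m := 1 - a₀ / a₁) (by linarith) (by linarith [div_pos h0 ha₁])
  rw [sub_sub_cancel] at key
  rw [sq_sqrt (by linarith)]
  calc 0 < a₁ / a₀ * (ellipticE (1 - a₀ / a₁) - a₀ / a₁ * ellipticK (1 - a₀ / a₁)) :=
        mul_pos (div_pos ha₁ h0) key
    _ = _ := by field_simp

theorem stmt3 (a₀ a₁ a₂ : ℝ) (h0 : 0 < a₀) (h1 : a₀ < a₁) (h2 : a₁ < a₂) :
    0 < (a₁ / a₀) *
          (∫ s in (0:ℝ)..1,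
            Real.sqrt (1 - (Real.sqrt (1 - a₀/a₁))^2 * s^2) / Real.sqrt (1 - s^2))
        - ∫ s in (0:ℝ)..1,
            1 / Real.sqrt ((1 - s^2) * (1 - (Real.sqrt (1 - a₀/a₁))^2 * s^2)) :=
  stmt3_general a₀ a₁ h0 h1
end

section
/- Let 0 < a₀ < a₁ < a₂. Then (√((a₂-a₀)(a₁-a₀)/a₀)/π) · ∫_{a₁}^{a₂} √s/(√((a₂-s)(s-a₁))(s-a₀)) ds > √(a₁(a₁-a₀)/(a₀(a₂-a₀))). -/
open Real Set Filter MeasureTheory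

/-!
The substitution `s = a₁ + (a₂ - a₁) sin² θ` turns `ds / √((a₂ - s)(s - a₁))` into `2 dθ` on
`[0, π/2]`, so the integral equals `∫₀^{π/2} 2 √s / (s - a₀) dθ`. On `[a₁, a₂]` the function
`√s / (s - a₀)` is at least `√a₁ / (a₂ - a₀)`, strictly so inside, which bounds the integral below
by `π √a₁ / (a₂ - a₀)`; multiplying by the prefactor gives exactly the left-hand side.
-/

noncomputable def sinSqPath (a b θ : ℝ) : ℝ := a + (b - a) * sin θ ^ 2

section sinSqPath

variable {a b : ℝ}

lemma sinSqPath_sub (a b θ : ℝ) : sinSqPath a b θ - a = (b - a) * sin θ ^ 2 := by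
  simp only [sinSqPath]; ring

lemma sub_sinSqPath (a b θ : ℝ) : b - sinSqPath a b θ = (b - a) * cos θ ^ 2 := by
  simp only [sinSqPath]; linear_combination (a - b) * sin_sq_add_cos_sq θ

lemma continuous_sinSqPath (a b : ℝ) : Continuous (sinSqPath a b) := by
  unfold sinSqPath; fun_prop

lemma hasDerivAt_sinSqPath (a b θ : ℝ) :
    HasDerivAt (sinSqPath a b) ((b - a) * (2 * sin θ * cos θ)) θ :=
  ((((hasDerivAt_sin θ).pow 2).const_mul (b - a)).const_add a).congr_deriv (by norm_num)

lemma sinSqPath_mem_Icc (hab : a ≤ b) (θ : ℝ) : sinSqPath a b θ ∈ Icc a b := by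
  constructor
  · nlinarith [sinSqPath_sub a b θ, sq_nonneg (sin θ)]
  · nlinarith [sub_sinSqPath a b θ, sq_nonneg (cos θ)]

lemma strictMonoOn_sinSqPath (hab : a < b) : StrictMonoOn (sinSqPath a b) (Icc 0 (π / 2)) := by
  intro x hx y hy hxy
  have hsx : 0 ≤ sin x := sin_nonneg_of_nonneg_of_le_pi hx.1 (by linarith [hx.2, pi_pos])
  have hs : sin x < sin y :=
    strictMonoOn_sin ⟨by linarith [hx.1, pi_pos], hx.2⟩ ⟨by linarith [hy.1, pi_pos], hy.2⟩ hxy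
  have : sin x ^ 2 < sin y ^ 2 := by nlinarith
  simp only [sinSqPath]
  nlinarith

lemma sinSqPath_image_Ioo (hab : a < b) : sinSqPath a b '' Ioo 0 (π / 2) = Ioo a b := by
  refine Subset.antisymm ?_ ?_
  · rintro _ ⟨θ, hθ, rfl⟩
    have hs : 0 < sin θ := sin_pos_of_pos_of_lt_pi hθ.1 (by linarith [hθ.2, pi_pos])
    have hc : 0 < cos θ := cos_pos_of_mem_Ioo ⟨by linarith [hθ.1, pi_pos], hθ.2⟩
    constructor
    · nlinarith [sinSqPath_sub a b θ, mul_pos (sub_pos.2 hab) (pow_pos hs 2)]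
    · nlinarith [sub_sinSqPath a b θ, mul_pos (sub_pos.2 hab) (pow_pos hc 2)]
  · simpa [sinSqPath] using intermediate_value_Ioo (by positivity : (0 : ℝ) ≤ π / 2)
      (continuous_sinSqPath a b).continuousOn

lemma sqrt_sub_mul_sinSqPath_sub (hab : a ≤ b) {θ : ℝ} (hθ : θ ∈ Icc 0 (π / 2)) :
    √((b - sinSqPath a b θ) * (sinSqPath a b θ - a)) = (b - a) * sin θ * cos θ := by
  have hs : 0 ≤ sin θ := sin_nonneg_of_nonneg_of_le_pi hθ.1 (by linarith [hθ.2, pi_pos])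
  have hc : 0 ≤ cos θ := cos_nonneg_of_mem_Icc ⟨by linarith [hθ.1, pi_pos], hθ.2⟩
  rw [sub_sinSqPath, sinSqPath_sub, ← sqrt_sq (by positivity : 0 ≤ (b - a) * sin θ * cos θ)]
  ring_nf

end sinSqPath

theorem integral_div_sqrt_sub_mul_sub {a b : ℝ} (hab : a < b) (f : ℝ → ℝ) :
    ∫ s in a..b, f s / √((b - s) * (s - a)) = ∫ θ in 0..π / 2, 2 * f (sinSqPath a b θ) := by
  have hpi : (0 : ℝ) ≤ π / 2 := by positivity
  rw [intervalIntegral.integral_of_le hab.le, intervalIntegral.integral_of_le hpi,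
    integral_Ioc_eq_integral_Ioo, integral_Ioc_eq_integral_Ioo, ← sinSqPath_image_Ioo hab,
    integral_image_eq_integral_abs_deriv_smul measurableSet_Ioo
      (fun θ _ => (hasDerivAt_sinSqPath a b θ).hasDerivWithinAt)
      ((strictMonoOn_sinSqPath hab).injOn.mono Ioo_subset_Icc_self)]
  refine setIntegral_congr_fun measurableSet_Ioo fun θ hθ => ?_
  have hs : 0 < sin θ := sin_pos_of_pos_of_lt_pi hθ.1 (by linarith [hθ.2, pi_pos])
  have hc : 0 < cos θ := cos_pos_of_mem_Ioo ⟨by linarith [hθ.1, pi_pos], hθ.2⟩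
  have hba : 0 < b - a := sub_pos.2 hab
  rw [sqrt_sub_mul_sinSqPath_sub hab.le (Ioo_subset_Icc_self hθ), smul_eq_mul,
    abs_of_pos (by positivity)]
  field_simp

lemma sqrt_div_sub_le {a₀ a₁ a₂ s : ℝ} (h1 : a₀ < a₁) (hs : s ∈ Icc a₁ a₂) :
    √a₁ / (a₂ - a₀) ≤ √s / (s - a₀) :=
  div_le_div₀ (sqrt_nonneg _) (sqrt_le_sqrt hs.1) (by linarith [hs.1]) (by linarith [hs.2])

lemma sqrt_div_sub_lt {a₀ a₁ a₂ s : ℝ} (ha₁ : 0 ≤ a₁) (h1 : a₀ < a₁) (hs : s ∈ Ioc a₁ a₂) :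
    √a₁ / (a₂ - a₀) < √s / (s - a₀) :=
  div_lt_div₀ (sqrt_lt_sqrt ha₁ hs.1) (by linarith [hs.2]) (sqrt_nonneg _) (by linarith [hs.1])

lemma pi_mul_sqrt_div_lt_integral {a₀ a₁ a₂ : ℝ} (ha₁ : 0 ≤ a₁) (h1 : a₀ < a₁) (h2 : a₁ < a₂) :
    π * (√a₁ / (a₂ - a₀)) < ∫ s in a₁..a₂, √s / (s - a₀) / √((a₂ - s) * (s - a₁)) := by
  set c := √a₁ / (a₂ - a₀)
  set p := sinSqPath a₁ a₂
  have hp : ∀ θ, p θ ∈ Icc a₁ a₂ := sinSqPath_mem_Icc h2.le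
  have hcont : Continuous fun θ => 2 * (√(p θ) / (p θ - a₀)) :=
    continuous_const.mul <| (continuous_sinSqPath a₁ a₂).sqrt.div
      ((continuous_sinSqPath a₁ a₂).sub continuous_const) fun θ => by linarith [(hp θ).1]
  have hmid : π / 4 ∈ Ioo 0 (π / 2) := ⟨by positivity, by linarith [pi_pos]⟩
  have hlt := intervalIntegral.integral_lt_integral_of_continuousOn_of_le_of_exists_lt
    (f := fun _ => 2 * c) (by positivity : (0 : ℝ) < π / 2) continuousOn_const
    hcont.continuousOn (fun θ _ => by gcongr; exact sqrt_div_sub_le h1 (hp θ))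
    ⟨π / 4, Ioo_subset_Icc_self hmid, by
      gcongr; exact sqrt_div_sub_lt ha₁ h1 (Ioo_subset_Ioc_self
        ((sinSqPath_image_Ioo h2).subset (mem_image_of_mem _ hmid)))⟩
  rw [integral_div_sqrt_sub_mul_sub h2]
  convert hlt using 1
  simp only [intervalIntegral.integral_const, smul_eq_mul]
  ring

theorem stmt13 (a₀ a₁ a₂ : ℝ) (h0 : 0 < a₀) (h1 : a₀ < a₁) (h2 : a₁ < a₂) :
    Real.sqrt (a₁ * (a₁ - a₀) / (a₀ * (a₂ - a₀)))
      < (Real.sqrt ((a₂ - a₀) * (a₁ - a₀) / a₀) / π) *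
          ∫ s in a₁..a₂, Real.sqrt s / (Real.sqrt ((a₂ - s) * (s - a₁)) * (s - a₀)) := by
  set K := √((a₂ - a₀) * (a₁ - a₀) / a₀)
  have h20 : 0 < a₂ - a₀ := by linarith
  have hX : 0 < (a₂ - a₀) * (a₁ - a₀) / a₀ := by have := sub_pos.2 h1; positivity
  have hlhs : √(a₁ * (a₁ - a₀) / (a₀ * (a₂ - a₀))) = K / π * (π * (√a₁ / (a₂ - a₀))) := by
    have hK : K * √a₁ / (a₂ - a₀) = √((a₂ - a₀) * (a₁ - a₀) / a₀ * a₁ / (a₂ - a₀) ^ 2) := by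
      rw [sqrt_div' _ (sq_nonneg _), sqrt_sq h20.le, sqrt_mul hX.le]
    rw [show K / π * (π * (√a₁ / (a₂ - a₀))) = K * √a₁ / (a₂ - a₀) by field_simp, hK]
    congr 1
    field_simp
  calc √(a₁ * (a₁ - a₀) / (a₀ * (a₂ - a₀))) = K / π * (π * (√a₁ / (a₂ - a₀))) := hlhs
    _ < K / π * ∫ s in a₁..a₂, √s / (s - a₀) / √((a₂ - s) * (s - a₁)) :=
      mul_lt_mul_of_pos_left (pi_mul_sqrt_div_lt_integral (by linarith) h1 h2) (by positivity)
    _ = K / π * ∫ s in a₁..a₂, √s / (√((a₂ - s) * (s - a₁)) * (s - a₀)) := by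
      simp_rw [div_mul_eq_div_div_swap]
end
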